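/- Let R be a commutative noetherian ring satisfying Serre's condition (S_1) and let D be a finitely generated R-module. If p ∈ Spec(R) with ht(p) ≥ 1, then for any Gorenstein injective R-module G one has Hom_R(D, E_R(R/p)) ⊗_R G = 0, where E_R(R/p) is the injective hull of R/p. -/

import Mathlib

/-!
Common definitions: property t(p), injective hulls, (C-)Gorenstein injective modules,
(C-)Gorenstein injective / injective / flat dimensions, small support, torsion functor,
Tor and Ext modules, semidualizing and dualizing modules, depth, Cohen-Macaulay rings,
Serre's condition (S₁), Gorenstein local rings, minimal injective resolutions.
-/

universe u

open CategoryTheory Limits DirectSum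

noncomputable section

/-- An `R`-module `S` has property `t(p)`: multiplication by every `r ∉ p` is bijective on `S`,
and every element of `S` is annihilated by a power of `p`. -/
def PropT (R : Type u) [CommRing R] (p : Ideal R) (S : Type u) [AddCommGroup S]
    [Module R S] : Prop :=
  (∀ r : R, r ∉ p → Function.Bijective (fun s : S => r • s)) ∧
  (∀ x : S, ∃ m : ℕ, 0 < m ∧ ∀ a ∈ p ^ m, a • x = 0)

/-- `E` is an injective hull of `N` over `R`: `E` is injective and `N` embeds in `E` as an
essential submodule. -/
def IsInjectiveHull (R : Type u) [CommRing R] (N : Type u) [AddCommGroup N] [Module R N]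
    (E : Type u) [AddCommGroup E] [Module R E] : Prop :=
  Module.Injective R E ∧ ∃ ι : N →ₗ[R] E, Function.Injective ι ∧
    ∀ K : Submodule R E, K ≠ ⊥ → K ⊓ LinearMap.range ι ≠ ⊥

/-- A complete injective resolution: a doubly infinite exact sequence of injective modules
which stays exact after applying `Hom_R(-, I)` for every injective module `I`. -/
structure CompleteInjRes (R : Type u) [CommRing R] where
  E : ℤ → Type u
  [acg : ∀ i, AddCommGroup (E i)]
  [mod : ∀ i, Module R (E i)]
  d : ∀ i, E i →ₗ[R] E (i + 1)
  inj : ∀ i, Module.Injective R (E i)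
  exct : ∀ i, LinearMap.range (d i) = LinearMap.ker (d (i + 1))
  homExact : ∀ (I : Type u) [AddCommGroup I] [Module R I], Module.Injective R I →
    ∀ (i : ℤ) (g : E (i + 1) →ₗ[R] I), g ∘ₗ d i = 0 →
      ∃ h : E (i + 1 + 1) →ₗ[R] I, h ∘ₗ d (i + 1) = g

attribute [instance] CompleteInjRes.acg CompleteInjRes.mod

/-- `G` is a Gorenstein injective `R`-module: it is the image of some map in a complete
injective resolution. -/
def GorensteinInjective (R : Type u) [CommRing R] (G : Type u) [AddCommGroup G]
    [Module R G] : Prop :=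
  ∃ X : CompleteInjRes R, Nonempty (G ≃ₗ[R] LinearMap.range (X.d 0))

/-- A complete `I_C I`-resolution: an exact sequence
`⋯ → Hom(C,I₁) → Hom(C,I₀) → I⁰ → I¹ → ⋯` (terms in nonnegative degrees are injective,
terms in negative degrees are of the form `Hom_R(C, I)` with `I` injective) such that
`Hom_R(Hom_R(C,J), -)` leaves it exact for every injective `R`-module `J`. -/
structure CompleteICIRes (R : Type u) [CommRing R] (C : Type u) [AddCommGroup C]
    [Module R C] where
  X : ℤ → Type u
  [acg : ∀ i, AddCommGroup (X i)]
  [mod : ∀ i, Module R (X i)]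
  d : ∀ i, X i →ₗ[R] X (i + 1)
  exct : ∀ i, LinearMap.range (d i) = LinearMap.ker (d (i + 1))
  injPos : ∀ i : ℤ, 0 ≤ i → Module.Injective R (X i)
  homCInjNeg : ∀ i : ℤ, i < 0 → ∃ (I : Type u) (_ : AddCommGroup I) (_ : Module R I),
    Module.Injective R I ∧ Nonempty (X i ≃ₗ[R] (C →ₗ[R] I))
  homExact : ∀ (J : Type u) [AddCommGroup J] [Module R J], Module.Injective R J →
    ∀ (i : ℤ) (g : (C →ₗ[R] J) →ₗ[R] X (i + 1)), d (i + 1) ∘ₗ g = 0 →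
      ∃ h : (C →ₗ[R] J) →ₗ[R] X i, d i ∘ₗ h = g

attribute [instance] CompleteICIRes.acg CompleteICIRes.mod

/-- `G` is a `C`-Gorenstein injective `R`-module: it is the image of the map
`Hom_R(C, I₀) → I⁰` in some complete `I_C I`-resolution. -/
def CGorensteinInjective (R : Type u) [CommRing R] (C : Type u) [AddCommGroup C] [Module R C]
    (G : Type u) [AddCommGroup G] [Module R G] : Prop :=
  ∃ X : CompleteICIRes R C, Nonempty (G ≃ₗ[R] LinearMap.range (X.d (-1)))

/-- `M` has a `C`-Gorenstein injective coresolution `0 → M → G⁰ → ⋯ → Gⁿ → 0`,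
i.e. `C`-Gorenstein injective dimension at most `n`. -/
def CGidLE (R : Type u) [CommRing R] (C : Type u) [AddCommGroup C] [Module R C] :
    ℕ → ModuleCat.{u} R → Prop
  | 0, M => CGorensteinInjective R C M
  | n + 1, M => ∃ (G : ModuleCat.{u} R), CGorensteinInjective R C G ∧
      ∃ ι : M →ₗ[R] G, Function.Injective ι ∧
        CGidLE R C n (ModuleCat.of R (G ⧸ LinearMap.range ι))

/-- The `C`-Gorenstein injective dimension of `M` (equal to `⊤` if `M` admits no bounded
coresolution by `C`-Gorenstein injective modules). -/
def CGid (R : Type u) [CommRing R] (C : Type u) [AddCommGroup C] [Module R C]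
    (M : Type u) [AddCommGroup M] [Module R M] : ℕ∞ :=
  sInf {n : ℕ∞ | ∃ m : ℕ, (m : ℕ∞) = n ∧ CGidLE R C m (ModuleCat.of R M)}

/-- There exists an exact sequence `0 → N → Gₙ → ⋯ → G₁ → M → 0` in which each `Gᵢ` is
`C`-Gorenstein injective (and `N` is arbitrary). -/
def CGICoresApprox (R : Type u) [CommRing R] (C : Type u) [AddCommGroup C] [Module R C] :
    ℕ → ModuleCat.{u} R → Prop
  | 0, _ => True
  | n + 1, M => ∃ (G : ModuleCat.{u} R), CGorensteinInjective R C G ∧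
      ∃ π : G →ₗ[R] M, Function.Surjective π ∧
        CGICoresApprox R C n (ModuleCat.of R (LinearMap.ker π))

/-- The `a`-torsion submodule `Γ_a(N)` of `N`. -/
def torsionSubmodule (R : Type u) [CommRing R] (a : Ideal R) (N : Type u) [AddCommGroup N]
    [Module R N] : Submodule R N :=
  ⨆ m : ℕ, Submodule.torsionBySet R N ((a ^ m : Ideal R) : Set R)

/-- `Tor_i^R(M, N)`, as an object of `ModuleCat R`. -/
abbrev TorM (R : Type u) [CommRing R] (i : ℕ) (M N : Type u) [AddCommGroup M] [Module R M]
    [AddCommGroup N] [Module R N] : ModuleCat.{u} R :=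
  ((Tor (ModuleCat.{u} R) i).obj (ModuleCat.of R M)).obj (ModuleCat.of R N)

/-- `Ext_R^i(M, N)`, as an object of `ModuleCat R`. -/
abbrev ExtM (R : Type u) [CommRing R] (i : ℕ) (M N : Type u) [AddCommGroup M] [Module R M]
    [AddCommGroup N] [Module R N] : ModuleCat.{u} R :=
  ((Ext R (ModuleCat.{u} R) i).obj (Opposite.op (ModuleCat.of R M))).obj (ModuleCat.of R N)

/-- The small support of `M`: primes `p` such that `Tor_i^R(κ(p), M) ≠ 0` for some `i`,
where `κ(p)` is the residue field of `R_p`. -/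
def smallSupport (R : Type u) [CommRing R] (M : Type u) [AddCommGroup M] [Module R M] :
    Set (PrimeSpectrum R) :=
  {p | ∃ i : ℕ,
    Nontrivial (TorM R i (IsLocalRing.ResidueField (Localization.AtPrime p.asIdeal)) M)}

/-- `C` is a semidualizing `R`-module: finitely generated, the homothety map
`R → Hom_R(C,C)` is bijective, and `Ext_R^i(C,C) = 0` for `i ≥ 1`. -/
def IsSemidualizing (R : Type u) [CommRing R] (C : Type u) [AddCommGroup C] [Module R C] : Prop :=
  Module.Finite R C ∧
  Function.Bijective (fun r : R => (r • LinearMap.id : C →ₗ[R] C)) ∧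
  ∀ i : ℕ, 1 ≤ i → Subsingleton (ExtM R i C C)

/-- `M` has injective dimension at most `n`. -/
def InjDimLE (R : Type u) [CommRing R] : ℕ → ModuleCat.{u} R → Prop
  | 0, M => Module.Injective R M
  | n + 1, M => ∃ (I : ModuleCat.{u} R), Module.Injective R I ∧
      ∃ ι : M →ₗ[R] I, Function.Injective ι ∧
        InjDimLE R n (ModuleCat.of R (I ⧸ LinearMap.range ι))

/-- `M` has flat dimension at most `n`. -/
def FlatDimLE (R : Type u) [CommRing R] : ℕ → ModuleCat.{u} R → Prop
  | 0, M => Module.Flat R M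
  | n + 1, M => ∃ (F : ModuleCat.{u} R), Module.Flat R F ∧
      ∃ π : F →ₗ[R] M, Function.Surjective π ∧
        FlatDimLE R n (ModuleCat.of R (LinearMap.ker π))

/-- `D` is a dualizing `R`-module: semidualizing of finite injective dimension. -/
def IsDualizing (R : Type u) [CommRing R] (D : Type u) [AddCommGroup D] [Module R D] : Prop :=
  IsSemidualizing R D ∧ ∃ n : ℕ, InjDimLE R n (ModuleCat.of R D)

/-- The depth of a local ring: the supremum of lengths of regular sequences contained in
the maximal ideal. -/
def localRingDepth (A : Type u) [CommRing A] [IsLocalRing A] : ℕ∞ :=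
  sSup {n : ℕ∞ | ∃ rs : List A, (∀ r ∈ rs, r ∈ IsLocalRing.maximalIdeal A) ∧
    RingTheory.Sequence.IsRegular A rs ∧ (rs.length : ℕ∞) = n}

/-- `R` is a Cohen-Macaulay ring: for each prime `p`, `depth (R_p) = dim (R_p)`. -/
def IsCohenMacaulayRing (R : Type u) [CommRing R] : Prop :=
  ∀ (p : Ideal R) (_ : p.IsPrime),
    (localRingDepth (Localization.AtPrime p) : WithBot ℕ∞) =
      ringKrullDim (Localization.AtPrime p)

/-- Serre's condition `(S₁)`: `depth (R_p) ≥ min (ht p, 1)` for every prime `p`. -/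
def SerreS1 (R : Type u) [CommRing R] : Prop :=
  ∀ (p : Ideal R) (hp : p.IsPrime),
    min (Order.height (⟨p, hp⟩ : PrimeSpectrum R)) 1 ≤ localRingDepth (Localization.AtPrime p)

/-- A Gorenstein local ring: a noetherian local ring of finite self-injective dimension. -/
def IsGorensteinLocalRing (A : Type u) [CommRing A] : Prop :=
  IsLocalRing A ∧ IsNoetherianRing A ∧ ∃ n : ℕ, InjDimLE A n (ModuleCat.of A A)

/-- A minimal injective resolution `0 → D → J⁰ → J¹ → ⋯` of `D`: an exact sequence with all
`Jⁱ` injective, in which the kernel of each differential is an essential submodule. -/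
structure MinimalInjRes (R : Type u) [CommRing R] (D : Type u) [AddCommGroup D]
    [Module R D] where
  J : ℕ → Type u
  [acg : ∀ i, AddCommGroup (J i)]
  [mod : ∀ i, Module R (J i)]
  ε : D →ₗ[R] J 0
  d : ∀ i, J i →ₗ[R] J (i + 1)
  inj : ∀ i, Module.Injective R (J i)
  ε_inj : Function.Injective ε
  exct0 : LinearMap.range ε = LinearMap.ker (d 0)
  exct : ∀ i, LinearMap.range (d i) = LinearMap.ker (d (i + 1))
  minimal : ∀ i, ∀ K : Submodule R (J i), K ≠ ⊥ → K ⊓ LinearMap.ker (d i) ≠ ⊥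

attribute [instance] MinimalInjRes.acg MinimalInjRes.mod

end

/-!
An element `x ∈ p` that is a non-zero-divisor exists by `(S₁)`: otherwise prime avoidance puts
`p` inside an associated prime of `R`, and `(S₁)` forces associated primes to be minimal.
Every element of `Hom_R(D, E)` is killed by a power of `x`, because `E` is an essential
extension of `R ⧸ p` and `D` is finitely generated; on the other hand `G` is a quotient of an
injective module, hence divisible by the non-zero-divisor `x`. Torsion tensored with divisible
vanishes.
-/

section

open scoped nonZeroDivisors

variable {R : Type u} [CommRing R] {x : R}

theorem localRingDepth_eq_zero_of_maximalIdeal_mem_associatedPrimes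
    {A : Type u} [CommRing A] [IsLocalRing A] [IsNoetherianRing A]
    (h : IsLocalRing.maximalIdeal A ∈ associatedPrimes A A) :
    localRingDepth A = 0 := by
  refine le_antisymm (sSup_le ?_) bot_le
  rintro _ ⟨_ | ⟨r, rs⟩, hmem, hreg, rfl⟩
  · simp
  · obtain ⟨y, hy0, hry⟩ : r ∈ {r : A | ∃ y : A, y ≠ 0 ∧ r • y = 0} :=
      biUnion_associatedPrimes_eq_zero_divisors A A ▸
        Set.mem_biUnion h (hmem r List.mem_cons_self)
    have hr : IsSMulRegular A r :=
      ((RingTheory.Sequence.isWeaklyRegular_cons_iff A r rs).mp hreg.toIsWeaklyRegular).1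
    exact absurd (hr (hry.trans (smul_zero r).symm)) hy0

theorem height_eq_zero_of_mem_associatedPrimes_of_serreS1 [IsNoetherianRing R]
    (hR : SerreS1 R) {P : Ideal R} (hP : P ∈ associatedPrimes R R) :
    Order.height (⟨P, hP.isPrime⟩ : PrimeSpectrum R) = 0 := by
  have := hP.isPrime
  have hmax : IsLocalRing.maximalIdeal (Localization.AtPrime P) ∈
      associatedPrimes (Localization.AtPrime P) (Localization.AtPrime P) :=
    Module.associatedPrimes.mem_associatedPrimes_of_comap_mem_associatedPrimes_of_isLocalizedModule
      P.primeCompl (Algebra.linearMap R (Localization.AtPrime P)) _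
      (by simpa [Localization.AtPrime.under_maximalIdeal] using hP)
  simpa [localRingDepth_eq_zero_of_maximalIdeal_mem_associatedPrimes hmax] using hR P hP.isPrime

theorem nonempty_inter_nonZeroDivisors_of_serreS1 [IsNoetherianRing R] (hR : SerreS1 R)
    {p : Ideal R} (hp : p.IsPrime) (hht : 1 ≤ Order.height (⟨p, hp⟩ : PrimeSpectrum R)) :
    ((p : Set R) ∩ R⁰).Nonempty := by
  by_contra! h
  obtain ⟨P, hP, hpP⟩ : ∃ P ∈ associatedPrimes R R, p ≤ P :=
    (p.subset_union_prime_finite (associatedPrimes.finite R R) (f := id) 0 0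
      fun _ h _ _ ↦ h.1).1 <| biUnion_associatedPrimes_eq_compl_nonZeroDivisors R ▸
        (Set.disjoint_iff_inter_eq_empty.mpr h).subset_compl_right
  have hle := hht.trans
    (Order.height_mono (show (⟨p, hp⟩ : PrimeSpectrum R) ≤ ⟨P, hP.isPrime⟩ from hpP))
  rw [height_eq_zero_of_mem_associatedPrimes_of_serreS1 hR hP] at hle
  exact absurd hle (by norm_num)

theorem Module.Injective.smul_surjective_of_mem_nonZeroDivisors {I : Type u} [AddCommGroup I]
    [Module R I] (hI : Module.Injective R I) (hx : x ∈ R⁰) :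
    Function.Surjective (x • · : I → I) := by
  intro e
  obtain ⟨h, hh⟩ := hI.out (LinearMap.lsmul R R x)
    (isRegular_iff_mem_nonZeroDivisors.mpr hx).left (LinearMap.toSpanSingleton R I e)
  refine ⟨h 1, ?_⟩
  simpa [← map_smul] using hh 1

theorem GorensteinInjective.smul_surjective_of_mem_nonZeroDivisors {G : Type u} [AddCommGroup G]
    [Module R G] (hG : GorensteinInjective R G) (hx : x ∈ R⁰) :
    Function.Surjective (x • · : G → G) := by
  obtain ⟨X, ⟨e⟩⟩ := hG
  let π : X.E 0 →ₗ[R] G := e.symm.toLinearMap ∘ₗ (X.d 0).rangeRestrict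
  have hπ : Function.Surjective π := e.symm.surjective.comp (X.d 0).surjective_rangeRestrict
  intro g
  obtain ⟨w, rfl⟩ := hπ g
  obtain ⟨w', rfl⟩ := (X.inj 0).smul_surjective_of_mem_nonZeroDivisors hx w
  exact ⟨π w', (map_smul π x w').symm⟩

theorem exists_pow_smul_eq_zero_of_essential [IsNoetherianRing R] {M : Type u} [AddCommGroup M]
    [Module R M] {N : Submodule R M} (hN : ∀ K : Submodule R M, K ≠ ⊥ → K ⊓ N ≠ ⊥)
    (hxN : ∀ n ∈ N, x • n = 0) (m : M) : ∃ k : ℕ, x ^ k • m = 0 := by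
  have hmono : Monotone fun k : ℕ => Ideal.torsionOf R M (x ^ k • m) :=
    monotone_nat_of_le_succ fun k r hr => by
      rw [Ideal.mem_torsionOf_iff] at hr ⊢
      rw [pow_succ', mul_smul, smul_comm, hr, smul_zero]
  obtain ⟨k, hk⟩ := monotone_stabilizes_iff_noetherian.mpr inferInstance ⟨_, hmono⟩
  refine ⟨k, by_contra fun hne => ?_⟩
  obtain ⟨z, ⟨hzK, hzN⟩, hz0⟩ := (Submodule.ne_bot_iff _).mp
    (hN (R ∙ x ^ k • m) (by simpa [Submodule.span_singleton_eq_bot] using hne))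
  obtain ⟨r, rfl⟩ := Submodule.mem_span_singleton.mp hzK
  -- `x` kills `r • x ^ k • m ∈ N`, so `r` lies in the next annihilator of the stable chain
  have hr : r ∈ Ideal.torsionOf R M (x ^ (k + 1) • m) := by
    rw [Ideal.mem_torsionOf_iff, pow_succ', mul_smul, smul_comm, hxN _ hzN]
  have hstable : Ideal.torsionOf R M (x ^ k • m) = Ideal.torsionOf R M (x ^ (k + 1) • m) :=
    hk (k + 1) k.le_succ
  rw [← hstable] at hr
  exact hz0 ((Ideal.mem_torsionOf_iff _ _).mp hr)

theorem LinearMap.exists_pow_smul_eq_zero_of_finite {D E : Type u} [AddCommGroup D] [Module R D]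
    [Module.Finite R D] [AddCommGroup E] [Module R E] (hE : ∀ e : E, ∃ k : ℕ, x ^ k • e = 0)
    (f : D →ₗ[R] E) : ∃ k : ℕ, x ^ k • f = 0 := by
  classical
  obtain ⟨s, hs⟩ := Module.Finite.fg_top (R := R) (M := D)
  choose k hk using fun d => hE (f d)
  refine ⟨s.sup k, LinearMap.ext_on hs fun d hd => ?_⟩
  rw [LinearMap.smul_apply, ← Nat.sub_add_cancel (Finset.le_sup hd), pow_add, mul_smul, hk,
    smul_zero, LinearMap.zero_apply]

theorem TensorProduct.subsingleton_of_pow_smul_eq_zero_of_smul_surjective {M N : Type u}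
    [AddCommGroup M] [Module R M] [AddCommGroup N] [Module R N]
    (hM : ∀ m : M, ∃ k : ℕ, x ^ k • m = 0) (hN : Function.Surjective (x • · : N → N)) :
    Subsingleton (TensorProduct R M N) := by
  refine subsingleton_of_forall_eq 0 fun z => ?_
  induction z using TensorProduct.induction_on with
  | zero => rfl
  | tmul m n =>
    obtain ⟨k, hk⟩ := hM m
    have hNk : Function.Surjective (x ^ k • · : N → N) := smul_iterate (α := N) x k ▸ hN.iterate k
    obtain ⟨n', rfl⟩ := hNk n
    rw [← TensorProduct.smul_tmul, hk, TensorProduct.zero_tmul]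
  | add a b ha hb => rw [ha, hb, add_zero]

end

/-- Over an `(S₁)` noetherian ring, if `D` is finitely generated, `ht p ≥ 1`
and `E` is the injective hull of `R/p`, then `Hom_R(D, E) ⊗_R G = 0` for every Gorenstein
injective module `G`. -/
theorem statement5 (R : Type u) [CommRing R] [IsNoetherianRing R] (hR : SerreS1 R)
    (D : Type u) [AddCommGroup D] [Module R D] [Module.Finite R D]
    (p : Ideal R) (hp : p.IsPrime)
    (hht : 1 ≤ Order.height (⟨p, hp⟩ : PrimeSpectrum R))
    (E : Type u) [AddCommGroup E] [Module R E] (hE : IsInjectiveHull R (R ⧸ p) E)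
    (G : Type u) [AddCommGroup G] [Module R G] (hG : GorensteinInjective R G) :
    Subsingleton (TensorProduct R (D →ₗ[R] E) G) := by
  obtain ⟨x, hxp, hx⟩ := nonempty_inter_nonZeroDivisors_of_serreS1 hR hp hht
  obtain ⟨-, ι, -, hess⟩ := hE
  have hxι : ∀ e ∈ LinearMap.range ι, x • e = 0 := by
    rintro _ ⟨c, rfl⟩
    obtain ⟨c, rfl⟩ := Ideal.Quotient.mk_surjective c
    rw [← map_smul, ← map_zero ι]
    exact congrArg ι (Ideal.Quotient.eq_zero_iff_mem.mpr (p.mul_mem_right c hxp))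
  exact TensorProduct.subsingleton_of_pow_smul_eq_zero_of_smul_surjective
    (LinearMap.exists_pow_smul_eq_zero_of_finite (exists_pow_smul_eq_zero_of_essential hess hxι))
    (hG.smul_surjective_of_mem_nonZeroDivisors hx)
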